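/- arXiv:2511.18907 — 4 statements merged into one kernel-verified Lean document; each statement's English description precedes it below -/
import Mathlib

section
/- Let N, K, T be positive integers with K ≤ N, λ > 0, σ² > 0, Ps > 0. Let q_n = (x_n, y_n) ∈ ℝ² for n = 1,…,N be antenna positions and r_1,…,r_K ∈ ℝ² target direction parameters; let A be the steering matrix with AᴴA invertible and Ȧ = [Ȧ_u, Ȧ_v] its derivative matrix, and let S ∈ ℂ^{K×T} satisfy ‖s_k‖₂² = T·Ps for every row s_k. Write x = (x_1,…,x_N), y = (y_1,…,y_N) and assume var(x) > 0, var(y) > 0 and var(x)·var(y) > cov(x,y)². If G = Re{(1₂ ⊗ (S Sᴴ)ᵀ) ⊙ Ȧᴴ Π_A^⊥ Ȧ} is positive definite, then tr((σ²/2)·G⁻¹) ≥ (K σ² λ² / (8 N T Ps π²)) · ( 1/(var(x) − cov(x,y)²/var(y)) + 1/(var(y) − cov(x,y)²/var(x)) ). -/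
open Matrix Kronecker

noncomputable section

/-- Mean of a real vector. -/
def mean {N : ℕ} (x : Fin N → ℝ) : ℝ := (∑ n, x n) / N

/-- Variance of a real vector. -/
def variance {N : ℕ} (x : Fin N → ℝ) : ℝ := (∑ n, (x n - mean x) ^ 2) / N

/-- Covariance of two real vectors. -/
def covar {N : ℕ} (x y : Fin N → ℝ) : ℝ :=
  (∑ n, (x n - mean x) * (y n - mean y)) / N

/-- The steering matrix `A ∈ ℂ^{N×K}` with entries `exp(i(2π/λ) qₙᵀ r_k)`. -/
def steer {N K : ℕ} (lam : ℝ) (q : Fin N → ℝ × ℝ) (r : Fin K → ℝ × ℝ) :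
    Matrix (Fin N) (Fin K) ℂ :=
  Matrix.of fun n k =>
    Complex.exp (Complex.I *
      ((2 * Real.pi / lam * ((q n).1 * (r k).1 + (q n).2 * (r k).2) : ℝ) : ℂ))

/-- Entries `i(2π/λ) xₙ exp(i(2π/λ) qₙᵀ r_k)`. -/
def steerDu {N K : ℕ} (lam : ℝ) (q : Fin N → ℝ × ℝ) (r : Fin K → ℝ × ℝ) :
    Matrix (Fin N) (Fin K) ℂ :=
  Matrix.of fun n k =>
    Complex.I * ((2 * Real.pi / lam * (q n).1 : ℝ) : ℂ) * steer lam q r n k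

/-- Entries `i(2π/λ) yₙ exp(i(2π/λ) qₙᵀ r_k)`. -/
def steerDv {N K : ℕ} (lam : ℝ) (q : Fin N → ℝ × ℝ) (r : Fin K → ℝ × ℝ) :
    Matrix (Fin N) (Fin K) ℂ :=
  Matrix.of fun n k =>
    Complex.I * ((2 * Real.pi / lam * (q n).2 : ℝ) : ℂ) * steer lam q r n k

/-- The derivative matrix `Ȧ = [Ȧ_u, Ȧ_v] ∈ ℂ^{N×2K}`, columns indexed by `Fin 2 × Fin K`. -/
def steerD {N K : ℕ} (lam : ℝ) (q : Fin N → ℝ × ℝ) (r : Fin K → ℝ × ℝ) :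
    Matrix (Fin N) (Fin 2 × Fin K) ℂ :=
  Matrix.of fun n p =>
    if p.1 = 0 then steerDu lam q r n p.2 else steerDv lam q r n p.2

/-- `Π_A^⊥ = I − A(AᴴA)⁻¹Aᴴ`. -/
def projPerp {N K : ℕ} (A : Matrix (Fin N) (Fin K) ℂ) : Matrix (Fin N) (Fin N) ℂ :=
  1 - A * (Aᴴ * A)⁻¹ * Aᴴ

/-- The 2×2 all-ones complex matrix. -/
def ones2 : Matrix (Fin 2) (Fin 2) ℂ := Matrix.of fun _ _ => 1

/-- `G = Re{(1₂ ⊗ (SSᴴ)ᵀ) ⊙ Ȧᴴ Π_A^⊥ Ȧ}`. -/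
def Gmat {N K T : ℕ} (lam : ℝ) (q : Fin N → ℝ × ℝ) (r : Fin K → ℝ × ℝ)
    (S : Matrix (Fin K) (Fin T) ℂ) :
    Matrix (Fin 2 × Fin K) (Fin 2 × Fin K) ℝ :=
  ((ones2 ⊗ₖ ((S * Sᴴ)ᵀ)) ⊙
      ((steerD lam q r)ᴴ * projPerp (steer lam q r) * steerD lam q r)).map Complex.re

section AuxLemmas

open Matrix
open scoped ComplexOrder

lemma diag_inv_ge {n : Type*} [Fintype n] [DecidableEq n]
    {G : Matrix n n ℝ} (hG : G.PosDef) (v : n → ℝ) (i : n) (t : ℝ) :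
    2 * t * v i - t ^ 2 * (v ⬝ᵥ G *ᵥ v) ≤ G⁻¹ i i := by
  have hdet : IsUnit G.det := isUnit_iff_ne_zero.mpr (ne_of_gt hG.det_pos)
  set w : n → ℝ := G⁻¹ *ᵥ Pi.single i 1 with hw
  have hGw : G *ᵥ w = Pi.single i 1 := by
    rw [hw, mulVec_mulVec, mul_nonsing_inv _ hdet, one_mulVec]
  have hsym : Gᵀ = G := hG.isHermitian.eq
  have h0 : 0 ≤ (t • v - w) ⬝ᵥ G *ᵥ (t • v - w) := by
    simpa using hG.posSemidef.dotProduct_mulVec_nonneg (t • v - w)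
  have e1 : v ⬝ᵥ G *ᵥ w = v i := by rw [hGw]; simp [dotProduct_single]
  have e2 : w ⬝ᵥ G *ᵥ v = v i := by
    rw [dotProduct_mulVec, ← mulVec_transpose, hsym, hGw]
    simp [single_dotProduct]
  have e3 : w ⬝ᵥ G *ᵥ w = G⁻¹ i i := by
    rw [hGw, dotProduct_single, hw, mulVec_single]
    simp
  have expand : (t • v - w) ⬝ᵥ G *ᵥ (t • v - w)
      = t ^ 2 * (v ⬝ᵥ G *ᵥ v) - 2 * t * v i + G⁻¹ i i := by
    rw [mulVec_sub, dotProduct_sub, sub_dotProduct, sub_dotProduct,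
      mulVec_smul, dotProduct_smul, dotProduct_smul, smul_dotProduct, smul_dotProduct,
      e1, e2, e3]
    simp only [smul_eq_mul]
    ring
  linarith [expand ▸ h0]

lemma projPerp_herm {N K : ℕ} (A : Matrix (Fin N) (Fin K) ℂ) :
    (projPerp A)ᴴ = projPerp A := by
  simp [projPerp, conjTranspose_sub, conjTranspose_mul, conjTranspose_nonsing_inv,
    Matrix.mul_assoc]

lemma projPerp_mul_self {N K : ℕ} (A : Matrix (Fin N) (Fin K) ℂ)
    (hA : IsUnit (Aᴴ * A).det) : projPerp A * A = 0 := by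
  unfold projPerp
  rw [Matrix.sub_mul, Matrix.one_mul, Matrix.mul_assoc, Matrix.mul_assoc,
    nonsing_inv_mul _ hA, Matrix.mul_one, sub_self]

lemma proj_bound {N K : ℕ} (A : Matrix (Fin N) (Fin K) ℂ) (hA : IsUnit (Aᴴ * A).det)
    (z : Fin N → ℂ) (c : Fin K → ℂ) :
    (star z ⬝ᵥ (projPerp A) *ᵥ z).re ≤ ∑ n, Complex.normSq (z n - (A *ᵥ c) n) := by
  set z' : Fin N → ℂ := z - A *ᵥ c with hz'
  have hPz : projPerp A *ᵥ z' = projPerp A *ᵥ z := by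
    rw [hz', mulVec_sub, mulVec_mulVec, projPerp_mul_self A hA, zero_mulVec, sub_zero]
  have hcross : star (A *ᵥ c) ⬝ᵥ (projPerp A) *ᵥ z = 0 := by
    rw [star_mulVec, dotProduct_mulVec, vecMul_vecMul]
    have : Aᴴ * projPerp A = 0 := by
      have := congrArg conjTranspose (projPerp_mul_self A hA)
      rwa [conjTranspose_mul, projPerp_herm, conjTranspose_zero] at this
    rw [this, vecMul_zero, zero_dotProduct]
  have key : star z' ⬝ᵥ (projPerp A) *ᵥ z' = star z ⬝ᵥ (projPerp A) *ᵥ z := by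
    rw [hPz, hz']
    simp [sub_dotProduct, star_sub, hcross]
  have hP : (A * (Aᴴ * A)⁻¹ * Aᴴ).PosSemidef := by
    have h1 : (Aᴴ * A).PosSemidef := posSemidef_conjTranspose_mul_self A
    have h2 := h1.mul_mul_conjTranspose_same (A * (Aᴴ * A)⁻¹)
    have h3 : (A * (Aᴴ * A)⁻¹)ᴴ = (Aᴴ * A)⁻¹ * Aᴴ := by
      simp [conjTranspose_mul, conjTranspose_nonsing_inv]
    have h4 : A * (Aᴴ * A)⁻¹ * (Aᴴ * A) = A := by
      rw [Matrix.mul_assoc, nonsing_inv_mul _ hA, Matrix.mul_one]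
    rwa [h3, h4, ← Matrix.mul_assoc] at h2
  have hle : (star z' ⬝ᵥ (projPerp A) *ᵥ z').re ≤ (star z' ⬝ᵥ z').re := by
    have h0 := hP.re_dotProduct_nonneg z'
    have : star z' ⬝ᵥ (projPerp A) *ᵥ z'
        = star z' ⬝ᵥ z' - star z' ⬝ᵥ (A * (Aᴴ * A)⁻¹ * Aᴴ) *ᵥ z' := by
      unfold projPerp
      rw [sub_mulVec, one_mulVec, dotProduct_sub]
    rw [this, Complex.sub_re]
    simpa using h0
  have hsum : (star z' ⬝ᵥ z').re = ∑ n, Complex.normSq (z' n) := by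
    rw [dotProduct, Complex.re_sum]
    congr 1; ext n
    simp [Complex.normSq_apply]
  rw [← key]
  calc (star z' ⬝ᵥ (projPerp A) *ᵥ z').re ≤ (star z' ⬝ᵥ z').re := hle
    _ = ∑ n, Complex.normSq (z n - (A *ᵥ c) n) := by rw [hsum]; simp [hz']

lemma dot_re {n : Type*} [Fintype n] (H : Matrix n n ℂ) (v : n → ℝ) :
    v ⬝ᵥ (H.map Complex.re) *ᵥ v
      = (star (fun i => (v i : ℂ)) ⬝ᵥ H *ᵥ (fun i => (v i : ℂ))).re := by
  simp only [dotProduct, mulVec, Matrix.map_apply, Pi.star_apply, Finset.mul_sum,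
    Complex.re_sum]
  refine Finset.sum_congr rfl fun i _ => Finset.sum_congr rfl fun j _ => ?_
  simp only [Complex.star_def, Complex.mul_re, Complex.conj_ofReal, Complex.ofReal_re,
    Complex.ofReal_im]
  ring

lemma quad_eq {N K T : ℕ} (lam : ℝ) (q : Fin N → ℝ × ℝ) (r : Fin K → ℝ × ℝ)
    (S : Matrix (Fin K) (Fin T) ℂ) (k : Fin K) (w : Fin 2 → ℝ) :
    (fun p : Fin 2 × Fin K => if p.2 = k then w p.1 else 0) ⬝ᵥ
      (Gmat lam q r S) *ᵥ (fun p : Fin 2 × Fin K => if p.2 = k then w p.1 else 0)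
    = ((S * Sᴴ) k k *
        (star (fun n => (w 0 : ℂ) * steerD lam q r n (0, k)
            + (w 1 : ℂ) * steerD lam q r n (1, k)) ⬝ᵥ
          (projPerp (steer lam q r)) *ᵥ
          (fun n => (w 0 : ℂ) * steerD lam q r n (0, k)
            + (w 1 : ℂ) * steerD lam q r n (1, k)))).re := by
  set A := steer lam q r
  set Ad := steerD lam q r
  set P := projPerp A
  set M := Adᴴ * P * Ad with hM
  set V : Fin 2 × Fin K → ℂ := fun p => if p.2 = k then ((w p.1 : ℝ) : ℂ) else 0 with hV
  have hz : (fun n => (w 0 : ℂ) * Ad n (0, k) + (w 1 : ℂ) * Ad n (1, k)) = Ad *ᵥ V := by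
    funext n
    simp only [mulVec, dotProduct, hV, Fintype.sum_prod_type, mul_ite, mul_zero,
      Finset.sum_ite_eq', Finset.mem_univ, if_true, Fin.sum_univ_two]
    ring
  have hzz : star (Ad *ᵥ V) ⬝ᵥ P *ᵥ (Ad *ᵥ V) = star V ⬝ᵥ M *ᵥ V := by
    rw [star_mulVec, mulVec_mulVec, dotProduct_mulVec, vecMul_vecMul, hM,
      ← dotProduct_mulVec, Matrix.mul_assoc, ← mulVec_mulVec]
  have hcast : (fun p : Fin 2 × Fin K =>
      (((if p.2 = k then w p.1 else 0 : ℝ)) : ℂ)) = V := by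
    funext p
    by_cases h : p.2 = k <;> simp [hV, h]
  have hGm : Gmat lam q r S = ((ones2 ⊗ₖ ((S * Sᴴ)ᵀ)) ⊙ M).map Complex.re := rfl
  rw [hz, hzz, hGm, dot_re, hcast]
  simp only [dotProduct, mulVec, Gmat, Matrix.map_apply, hadamard_apply, kroneckerMap_apply,
    ones2, Matrix.of_apply, one_mul, hV, Pi.star_apply, Complex.star_def,
    apply_ite (starRingEnd ℂ), map_zero,
    Complex.conj_ofReal, Fintype.sum_prod_type, ite_mul, zero_mul, mul_ite, mul_zero,
    Finset.sum_ite_eq', Finset.mem_univ, if_true, Finset.mul_sum, transpose_apply]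
  congr 1
  refine Finset.sum_congr rfl fun e _ => Finset.sum_congr rfl fun f _ =>
    Finset.sum_congr rfl fun x _ => ?_
  by_cases hf : f = k
  · subst hf; simp only [if_true]; ring
  · simp [hf]

lemma normsq_sum {N K : ℕ} (hN : 0 < N) (lam : ℝ) (q : Fin N → ℝ × ℝ) (r : Fin K → ℝ × ℝ)
    (k : Fin K) (w : Fin 2 → ℝ) :
    ∑ n, Complex.normSq
        ((w 0 : ℂ) * steerD lam q r n (0, k) + (w 1 : ℂ) * steerD lam q r n (1, k)
          - (steer lam q r *ᵥ Pi.single k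
              (Complex.I * ((2 * Real.pi / lam *
                (w 0 * mean (fun n => (q n).1) + w 1 * mean (fun n => (q n).2)) : ℝ) : ℂ))) n)
      = (2 * Real.pi / lam) ^ 2 * N *
        (w 0 ^ 2 * variance (fun n => (q n).1)
          + 2 * w 0 * w 1 * covar (fun n => (q n).1) (fun n => (q n).2)
          + w 1 ^ 2 * variance (fun n => (q n).2)) := by
  have hNne : (N : ℝ) ≠ 0 := Nat.cast_ne_zero.mpr hN.ne'
  have habs : ∀ n, Complex.normSq (steer lam q r n k) = 1 := by
    intro n
    rw [steer, Matrix.of_apply, ← Complex.sq_norm, Complex.norm_exp]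
    norm_num [Complex.mul_re]
  have hterm : ∀ n, Complex.normSq
      ((w 0 : ℂ) * steerD lam q r n (0, k) + (w 1 : ℂ) * steerD lam q r n (1, k)
        - (steer lam q r *ᵥ Pi.single k
            (Complex.I * ((2 * Real.pi / lam *
              (w 0 * mean (fun n => (q n).1) + w 1 * mean (fun n => (q n).2)) : ℝ) : ℂ))) n)
      = (2 * Real.pi / lam) ^ 2 *
          (w 0 * ((q n).1 - mean (fun n => (q n).1))
            + w 1 * ((q n).2 - mean (fun n => (q n).2))) ^ 2 := by
    intro n
    have hform : (w 0 : ℂ) * steerD lam q r n (0, k) + (w 1 : ℂ) * steerD lam q r n (1, k)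
        - (steer lam q r *ᵥ Pi.single k
            (Complex.I * ((2 * Real.pi / lam *
              (w 0 * mean (fun n => (q n).1) + w 1 * mean (fun n => (q n).2)) : ℝ) : ℂ))) n
        = Complex.I * ((2 * Real.pi / lam *
            (w 0 * ((q n).1 - mean (fun n => (q n).1))
              + w 1 * ((q n).2 - mean (fun n => (q n).2))) : ℝ) : ℂ) * steer lam q r n k := by
      have h0 : steerD lam q r n (0, k) = steerDu lam q r n k := rfl
      have h1 : steerD lam q r n (1, k) = steerDv lam q r n k := rfl
      rw [h0, h1, mulVec_single, steerDu, steerDv, Matrix.of_apply, Matrix.of_apply]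
      simp only [Pi.smul_apply, op_smul_eq_mul, col_apply]
      push_cast
      ring
    rw [hform, Complex.normSq_mul, Complex.normSq_mul, Complex.normSq_I, habs n,
      Complex.normSq_ofReal]
    ring
  rw [Finset.sum_congr rfl fun n _ => hterm n]
  have hsq : ∀ n : Fin N, (w 0 * ((q n).1 - mean (fun n => (q n).1))
      + w 1 * ((q n).2 - mean (fun n => (q n).2))) ^ 2
      = w 0 ^ 2 * ((q n).1 - mean (fun n => (q n).1)) ^ 2
        + 2 * w 0 * w 1 * (((q n).1 - mean (fun n => (q n).1)) *
            ((q n).2 - mean (fun n => (q n).2)))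
        + w 1 ^ 2 * ((q n).2 - mean (fun n => (q n).2)) ^ 2 := fun n => by ring
  have h1 : ∑ n, ((q n).1 - mean (fun n => (q n).1)) ^ 2
      = N * variance (fun n => (q n).1) := by rw [variance]; field_simp
  have h2 : ∑ n, (((q n).1 - mean (fun n => (q n).1)) *
      ((q n).2 - mean (fun n => (q n).2)))
      = N * covar (fun n => (q n).1) (fun n => (q n).2) := by rw [covar]; field_simp
  have h3 : ∑ n, ((q n).2 - mean (fun n => (q n).2)) ^ 2
      = N * variance (fun n => (q n).2) := by rw [variance]; field_simp
  rw [← Finset.mul_sum, Finset.sum_congr rfl fun n _ => hsq n]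
  rw [Finset.sum_add_distrib, Finset.sum_add_distrib, ← Finset.mul_sum, ← Finset.mul_sum,
    ← Finset.mul_sum, h1, h2, h3]
  ring

end AuxLemmas


/-- Lower bound on the trace of the CRB matrix `(σ²/2)·G⁻¹` in terms of the variances and
covariance of the antenna coordinates:
`tr((σ²/2)G⁻¹) ≥ (Kσ²λ²/(8NTPsπ²))·(1/(var(x) − cov²/var(y)) + 1/(var(y) − cov²/var(x)))`. -/
theorem stmt1 (N K T : ℕ) (hN : 0 < N) (hK : 0 < K) (hT : 0 < T) (hKN : K ≤ N)
    (lam σ2 Ps : ℝ) (hlam : 0 < lam) (hσ2 : 0 < σ2) (hPs : 0 < Ps)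
    (q : Fin N → ℝ × ℝ) (r : Fin K → ℝ × ℝ)
    (S : Matrix (Fin K) (Fin T) ℂ)
    (hS : ∀ k, ∑ t, Complex.normSq (S k t) = T * Ps)
    (hA : IsUnit ((steer lam q r)ᴴ * steer lam q r).det)
    (hvx : 0 < variance (fun n => (q n).1))
    (hvy : 0 < variance (fun n => (q n).2))
    (hvc : covar (fun n => (q n).1) (fun n => (q n).2) ^ 2 <
      variance (fun n => (q n).1) * variance (fun n => (q n).2))
    (hG : (Gmat lam q r S).PosDef) :
    K * σ2 * lam ^ 2 / (8 * N * T * Ps * Real.pi ^ 2) *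
        (1 / (variance (fun n => (q n).1) -
            covar (fun n => (q n).1) (fun n => (q n).2) ^ 2 /
              variance (fun n => (q n).2)) +
          1 / (variance (fun n => (q n).2) -
            covar (fun n => (q n).1) (fun n => (q n).2) ^ 2 /
              variance (fun n => (q n).1))) ≤
      Matrix.trace ((σ2 / 2) • (Gmat lam q r S)⁻¹) := by
  classical
  have hπ : 0 < Real.pi := Real.pi_pos
  have hNR : (0:ℝ) < N := by exact_mod_cast hN
  have hTR : (0:ℝ) < T := by exact_mod_cast hT
  have hKR : (0:ℝ) ≤ K := by positivity
  set vx := variance (fun n => (q n).1) with hvxd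
  set vy := variance (fun n => (q n).2) with hvyd
  set cv := covar (fun n => (q n).1) (fun n => (q n).2) with hcvd
  have hD : 0 < vx * vy - cv ^ 2 := by linarith
  have h2pl : 0 < 2 * Real.pi / lam := by
    apply div_pos
    · linarith
    · exact hlam
  set s : ℝ := (T:ℝ) * Ps * ((2 * Real.pi / lam) ^ 2 * (N:ℝ)) with hsd
  have hs0 : 0 < s := by
    rw [hsd]
    exact mul_pos (mul_pos hTR hPs) (mul_pos (pow_pos h2pl 2) hNR)
  -- key quadratic form bound
  have key : ∀ (k : Fin K) (w : Fin 2 → ℝ),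
      (fun p : Fin 2 × Fin K => if p.2 = k then w p.1 else 0) ⬝ᵥ
        (Gmat lam q r S) *ᵥ (fun p : Fin 2 × Fin K => if p.2 = k then w p.1 else 0)
      ≤ s * (w 0 ^ 2 * vx + 2 * w 0 * w 1 * cv + w 1 ^ 2 * vy) := by
    intro k w
    rw [quad_eq]
    have hSk : (S * Sᴴ) k k = (((T:ℝ) * Ps : ℝ) : ℂ) := by
      have : (S * Sᴴ) k k = ((∑ t, Complex.normSq (S k t) : ℝ) : ℂ) := by
        push_cast
        simp [Matrix.mul_apply, Matrix.conjTranspose_apply, Complex.mul_conj]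
      rw [this, hS k]
    rw [hSk, Complex.re_ofReal_mul]
    have hb := proj_bound (steer lam q r) hA
      (fun n => (w 0 : ℂ) * steerD lam q r n (0, k) + (w 1 : ℂ) * steerD lam q r n (1, k))
      (Pi.single k (Complex.I * ((2 * Real.pi / lam *
          (w 0 * mean (fun n => (q n).1) + w 1 * mean (fun n => (q n).2)) : ℝ) : ℂ)))
    rw [normsq_sum hN lam q r k w] at hb
    rw [← hvxd, ← hvyd, ← hcvd] at hb
    calc ((T:ℝ) * Ps) * (star (fun n => (w 0 : ℂ) * steerD lam q r n (0, k)
            + (w 1 : ℂ) * steerD lam q r n (1, k)) ⬝ᵥ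
          (projPerp (steer lam q r)) *ᵥ
          (fun n => (w 0 : ℂ) * steerD lam q r n (0, k)
            + (w 1 : ℂ) * steerD lam q r n (1, k))).re
        ≤ ((T:ℝ) * Ps) * ((2 * Real.pi / lam) ^ 2 * N *
            (w 0 ^ 2 * vx + 2 * w 0 * w 1 * cv + w 1 ^ 2 * vy)) := by
          apply mul_le_mul_of_nonneg_left hb (le_of_lt (mul_pos hTR hPs))
      _ = s * (w 0 ^ 2 * vx + 2 * w 0 * w 1 * cv + w 1 ^ 2 * vy) := by
          rw [hsd]; ring
  -- per-index diagonal bound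
  have hbound : ∀ (k : Fin K) (e : Fin 2) (w : Fin 2 → ℝ),
      2 * w e - s * (w 0 ^ 2 * vx + 2 * w 0 * w 1 * cv + w 1 ^ 2 * vy)
        ≤ (Gmat lam q r S)⁻¹ (e, k) (e, k) := by
    intro k e w
    have h' := diag_inv_ge hG (fun p : Fin 2 × Fin K => if p.2 = k then w p.1 else 0) (e, k) 1
    have hif : (if (e, k).2 = k then w (e, k).1 else 0) = w e := by simp
    rw [hif] at h'
    nlinarith [h', key k w]
  have e0 : ∀ k : Fin K,
      vy / (s * (vx * vy - cv ^ 2)) ≤ (Gmat lam q r S)⁻¹ ((0:Fin 2), k) ((0:Fin 2), k) := by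
    intro k
    have h := hbound k 0 ![vy / (s * (vx * vy - cv ^ 2)), -cv / (s * (vx * vy - cv ^ 2))]
    simp only [Matrix.cons_val_zero, Matrix.cons_val_one, Matrix.head_cons] at h
    have hquad : s * ((vy / (s * (vx * vy - cv ^ 2))) ^ 2 * vx
        + 2 * (vy / (s * (vx * vy - cv ^ 2))) * (-cv / (s * (vx * vy - cv ^ 2))) * cv
        + (-cv / (s * (vx * vy - cv ^ 2))) ^ 2 * vy)
        = vy / (s * (vx * vy - cv ^ 2)) := by
      have hsD : s * (vx * vy - cv ^ 2) ≠ 0 := by positivity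
      clear_value s
      generalize hX : s * (vx * vy - cv ^ 2) = X at hsD ⊢
      field_simp
      linear_combination hX
    rw [hquad] at h
    linarith
  have e1 : ∀ k : Fin K,
      vx / (s * (vx * vy - cv ^ 2)) ≤ (Gmat lam q r S)⁻¹ ((1:Fin 2), k) ((1:Fin 2), k) := by
    intro k
    have h := hbound k 1 ![-cv / (s * (vx * vy - cv ^ 2)), vx / (s * (vx * vy - cv ^ 2))]
    simp only [Matrix.cons_val_zero, Matrix.cons_val_one, Matrix.head_cons] at h
    have hquad : s * ((-cv / (s * (vx * vy - cv ^ 2))) ^ 2 * vx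
        + 2 * (-cv / (s * (vx * vy - cv ^ 2))) * (vx / (s * (vx * vy - cv ^ 2))) * cv
        + (vx / (s * (vx * vy - cv ^ 2))) ^ 2 * vy)
        = vx / (s * (vx * vy - cv ^ 2)) := by
      field_simp
      ring
    rw [hquad] at h
    linarith
  -- trace computation
  have htr : Matrix.trace ((σ2 / 2) • (Gmat lam q r S)⁻¹)
      = (σ2 / 2) * (∑ k : Fin K, (Gmat lam q r S)⁻¹ ((0:Fin 2), k) ((0:Fin 2), k)
          + ∑ k : Fin K, (Gmat lam q r S)⁻¹ ((1:Fin 2), k) ((1:Fin 2), k)) := by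
    rw [Matrix.trace_smul, smul_eq_mul]
    congr 1
    rw [Matrix.trace]
    rw [Fintype.sum_prod_type, Fin.sum_univ_two]
    rfl
  have hsum0 : (K:ℝ) * (vy / (s * (vx * vy - cv ^ 2)))
      ≤ ∑ k : Fin K, (Gmat lam q r S)⁻¹ ((0:Fin 2), k) ((0:Fin 2), k) := by
    calc (K:ℝ) * (vy / (s * (vx * vy - cv ^ 2)))
        = ∑ _k : Fin K, vy / (s * (vx * vy - cv ^ 2)) := by
          rw [Finset.sum_const, Finset.card_univ, Fintype.card_fin, nsmul_eq_mul]
      _ ≤ _ := Finset.sum_le_sum fun k _ => e0 k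
  have hsum1 : (K:ℝ) * (vx / (s * (vx * vy - cv ^ 2)))
      ≤ ∑ k : Fin K, (Gmat lam q r S)⁻¹ ((1:Fin 2), k) ((1:Fin 2), k) := by
    calc (K:ℝ) * (vx / (s * (vx * vy - cv ^ 2)))
        = ∑ _k : Fin K, vx / (s * (vx * vy - cv ^ 2)) := by
          rw [Finset.sum_const, Finset.card_univ, Fintype.card_fin, nsmul_eq_mul]
      _ ≤ _ := Finset.sum_le_sum fun k _ => e1 k
  have heq : K * σ2 * lam ^ 2 / (8 * N * T * Ps * Real.pi ^ 2) *
      (1 / (vx - cv ^ 2 / vy) + 1 / (vy - cv ^ 2 / vx))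
      = (σ2 / 2) * ((K:ℝ) * (vy / (s * (vx * vy - cv ^ 2)))
          + (K:ℝ) * (vx / (s * (vx * vy - cv ^ 2)))) := by
    have hvyne : vy ≠ 0 := ne_of_gt hvy
    have hvxne : vx ≠ 0 := ne_of_gt hvx
    have hDne : vx * vy - cv ^ 2 ≠ 0 := ne_of_gt hD
    have h1 : vx - cv ^ 2 / vy = (vx * vy - cv ^ 2) / vy := by field_simp
    have h2 : vy - cv ^ 2 / vx = (vx * vy - cv ^ 2) / vx := by field_simp
    rw [h1, h2, one_div_div, one_div_div, hsd]
    have hlamne : lam ≠ 0 := ne_of_gt hlam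
    have hπne : Real.pi ≠ 0 := ne_of_gt hπ
    have hNne : (N:ℝ) ≠ 0 := ne_of_gt hNR
    have hTne : (T:ℝ) ≠ 0 := ne_of_gt hTR
    have hPsne : Ps ≠ 0 := ne_of_gt hPs
    field_simp
    ring
  rw [htr, heq]
  have hσ2' : 0 ≤ σ2 / 2 := by linarith
  apply mul_le_mul_of_nonneg_left _ hσ2'
  exact add_le_add hsum0 hsum1


end
end

section
/- Let Φ ∈ ℂ^{n×n} be Hermitian positive definite and let P_1,…,P_K ∈ ℂ^{n×n} be Hermitian idempotent matrices (P_kᴴ = P_k, P_k² = P_k) that are pairwise orthogonal (P_k P_j = 0 for k ≠ j) and satisfy Σ_{k=1}^K P_k = I_n. Then the pinched matrix Ψ = Σ_{k=1}^K P_k Φ P_k is Hermitian positive definite, and tr(Ψ⁻¹) ≤ tr(Φ⁻¹). -/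
open Matrix ComplexOrder

lemma trace_nonneg_of_posSemidef {m : ℕ} {M : Matrix (Fin m) (Fin m) ℂ}
    (hM : M.PosSemidef) : 0 ≤ M.trace := by
  rw [Matrix.trace]
  apply Finset.sum_nonneg
  intro i _
  simpa [Matrix.diag, Matrix.mulVec_single, dotProduct, Pi.single_apply,
    Finset.sum_ite_eq] using hM.dotProduct_mulVec_nonneg (Pi.single i 1)

lemma sum_mulVec' {m : ℕ} {ι : Type*} (s : Finset ι) (M : ι → Matrix (Fin m) (Fin m) ℂ)
    (x : Fin m → ℂ) : (∑ k ∈ s, M k) *ᵥ x = ∑ k ∈ s, M k *ᵥ x := by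
  ext i
  simp only [Matrix.mulVec, dotProduct, Matrix.sum_apply, Finset.sum_apply, Finset.sum_mul]
  rw [Finset.sum_comm]

lemma dotProduct_sum' {m : ℕ} {ι : Type*} (s : Finset ι) (v : Fin m → ℂ)
    (w : ι → Fin m → ℂ) : v ⬝ᵥ (∑ k ∈ s, w k) = ∑ k ∈ s, v ⬝ᵥ w k := by
  simp only [dotProduct, Finset.sum_apply, Finset.mul_sum]
  rw [Finset.sum_comm]

/-- Pinching a Hermitian positive definite matrix `Φ` by a complete family of pairwise
orthogonal Hermitian projections yields a positive definite matrix `Ψ = Σ_k P_k Φ P_k`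
with `tr(Ψ⁻¹) ≤ tr(Φ⁻¹)`. -/
theorem stmt3 (n K : ℕ) (Φ : Matrix (Fin n) (Fin n) ℂ) (hΦ : Φ.PosDef)
    (P : Fin K → Matrix (Fin n) (Fin n) ℂ)
    (hherm : ∀ k, (P k)ᴴ = P k)
    (hidem : ∀ k, P k * P k = P k)
    (horth : ∀ k j, k ≠ j → P k * P j = 0)
    (hsum : ∑ k, P k = 1) :
    (∑ k, P k * Φ * P k).PosDef ∧
      Matrix.trace (∑ k, P k * Φ * P k)⁻¹ ≤ Matrix.trace Φ⁻¹ := by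
  set Ψ : Matrix (Fin n) (Fin n) ℂ := ∑ k, P k * Φ * P k with hΨdef
  -- each summand is positive semidefinite
  have hterm : ∀ k, (P k * Φ * P k).PosSemidef := by
    intro k
    have := hΦ.posSemidef.conjTranspose_mul_mul_same (P k)
    rwa [hherm k] at this
  -- Ψ is positive definite
  have hΨ : Ψ.PosDef := by
    refine posDef_iff_dotProduct_mulVec.mpr ⟨?_, ?_⟩
    · show Ψᴴ = Ψ
      rw [hΨdef, conjTranspose_sum]
      exact Finset.sum_congr rfl fun k _ => (hterm k).1
    · intro x hx
      have hxsum : ∑ k, P k *ᵥ x = x := by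
        have : (∑ k, P k) *ᵥ x = x := by rw [hsum, Matrix.one_mulVec]
        rwa [sum_mulVec'] at this
      obtain ⟨k₀, hk₀⟩ : ∃ k, P k *ᵥ x ≠ 0 := by
        by_contra h
        push_neg at h
        apply hx
        rw [← hxsum]
        simp [h]
      have hrw : ∀ k, star x ⬝ᵥ ((P k * Φ * P k) *ᵥ x)
          = star (P k *ᵥ x) ⬝ᵥ (Φ *ᵥ (P k *ᵥ x)) := by
        intro k
        rw [star_mulVec, hherm k, ← Matrix.dotProduct_mulVec,
          Matrix.mulVec_mulVec, Matrix.mulVec_mulVec]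
      rw [hΨdef, sum_mulVec', dotProduct_sum']
      apply Finset.sum_pos' (fun k _ => by rw [hrw k]; exact hΦ.posSemidef.dotProduct_mulVec_nonneg _)
      exact ⟨k₀, Finset.mem_univ _, by rw [hrw k₀]; exact hΦ.dotProduct_mulVec_pos hk₀⟩
  -- commutation of projections with Ψ
  have hcomm : ∀ j, Ψ * P j = P j * Φ * P j := by
    intro j
    rw [hΨdef, Finset.sum_mul]
    rw [Finset.sum_eq_single j]
    · rw [mul_assoc, mul_assoc, hidem j, ← mul_assoc]
    · intro k _ hk
      rw [mul_assoc, mul_assoc, horth k j hk, mul_zero, mul_zero]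
    · simp
  have hcomm' : ∀ j, P j * Ψ = P j * Φ * P j := by
    intro j
    rw [hΨdef, Finset.mul_sum]
    rw [Finset.sum_eq_single j]
    · rw [← mul_assoc, ← mul_assoc, hidem j]
    · intro k _ hk
      rw [← mul_assoc, ← mul_assoc, horth j k (Ne.symm hk), zero_mul, zero_mul]
    · simp
  have hΨunit := hΨ.isUnit
  have hΨdet : IsUnit Ψ.det := (Matrix.isUnit_iff_isUnit_det Ψ).mp hΨunit
  have hΨinv : Ψ * Ψ⁻¹ = 1 := Matrix.mul_nonsing_inv Ψ hΨdet
  have hΨinv' : Ψ⁻¹ * Ψ = 1 := Matrix.nonsing_inv_mul Ψ hΨdet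
  have hΦdet : IsUnit Φ.det := (Matrix.isUnit_iff_isUnit_det Φ).mp hΦ.isUnit
  have hΦinv' : Φ⁻¹ * Φ = 1 := Matrix.nonsing_inv_mul Φ hΦdet
  have hΦinv : Φ * Φ⁻¹ = 1 := Matrix.mul_nonsing_inv Φ hΦdet
  -- Ψ⁻¹ commutes with the projections
  have hinvcomm : ∀ j, P j * Ψ⁻¹ = Ψ⁻¹ * P j := by
    intro j
    calc P j * Ψ⁻¹ = Ψ⁻¹ * Ψ * P j * Ψ⁻¹ := by rw [hΨinv', one_mul]
      _ = Ψ⁻¹ * (Ψ * P j) * Ψ⁻¹ := by rw [mul_assoc Ψ⁻¹ Ψ (P j)]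
      _ = Ψ⁻¹ * (P j * Ψ) * Ψ⁻¹ := by rw [hcomm j, hcomm' j]
      _ = Ψ⁻¹ * P j * (Ψ * Ψ⁻¹) := by rw [mul_assoc, mul_assoc, mul_assoc]
      _ = Ψ⁻¹ * P j := by rw [hΨinv, mul_one]
  -- trace identity : tr(A Φ) = tr(A Ψ) for A = Ψ⁻¹ * Ψ⁻¹
  have hAcomm : ∀ j, P j * (Ψ⁻¹ * Ψ⁻¹) = Ψ⁻¹ * Ψ⁻¹ * P j := by
    intro j
    rw [← mul_assoc, hinvcomm j, mul_assoc, hinvcomm j, ← mul_assoc]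
  have htrkey : Matrix.trace (Ψ⁻¹ * Ψ⁻¹ * Φ) = Matrix.trace (Ψ⁻¹ * Ψ⁻¹ * Ψ) := by
    have step : ∀ k, Matrix.trace (Ψ⁻¹ * Ψ⁻¹ * (P k * Φ * P k))
        = Matrix.trace (Ψ⁻¹ * Ψ⁻¹ * (P k * Φ)) := by
      intro k
      calc Matrix.trace (Ψ⁻¹ * Ψ⁻¹ * (P k * Φ * P k))
          = Matrix.trace (P k * Φ * P k * (Ψ⁻¹ * Ψ⁻¹)) := Matrix.trace_mul_comm _ _
        _ = Matrix.trace (P k * Φ * (P k * (Ψ⁻¹ * Ψ⁻¹))) := by rw [mul_assoc (P k * Φ)]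
        _ = Matrix.trace (P k * Φ * (Ψ⁻¹ * Ψ⁻¹ * P k)) := by rw [hAcomm k]
        _ = Matrix.trace (Ψ⁻¹ * Ψ⁻¹ * P k * (P k * Φ)) := Matrix.trace_mul_comm _ _
        _ = Matrix.trace (Ψ⁻¹ * Ψ⁻¹ * (P k * (P k * Φ))) := by rw [mul_assoc (Ψ⁻¹ * Ψ⁻¹)]
        _ = Matrix.trace (Ψ⁻¹ * Ψ⁻¹ * (P k * Φ)) := by rw [← mul_assoc (P k), hidem k]
    have : Matrix.trace (Ψ⁻¹ * Ψ⁻¹ * Ψ) = ∑ k, Matrix.trace (Ψ⁻¹ * Ψ⁻¹ * (P k * Φ)) := by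
      rw [hΨdef, Finset.mul_sum, Matrix.trace_sum]
      exact Finset.sum_congr rfl fun k _ => step k
    rw [this]
    have h2 : ∀ k, Ψ⁻¹ * Ψ⁻¹ * (P k * Φ) = Ψ⁻¹ * Ψ⁻¹ * P k * Φ := fun k => by
      noncomm_ring
    simp_rw [h2]
    rw [← Matrix.trace_sum, ← Finset.sum_mul, ← Finset.mul_sum, hsum, mul_one]
  have htr : Matrix.trace (Ψ⁻¹ * Φ * Ψ⁻¹) = Matrix.trace Ψ⁻¹ := by
    rw [Matrix.trace_mul_cycle, htrkey, mul_assoc, hΨinv', mul_one]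
  -- the positive semidefinite square
  have hBherm : (Φ⁻¹ - Ψ⁻¹)ᴴ = Φ⁻¹ - Ψ⁻¹ := by
    rw [conjTranspose_sub, hΦ.isHermitian.inv, hΨ.isHermitian.inv]
  have hsq : ((Φ⁻¹ - Ψ⁻¹)ᴴ * Φ * (Φ⁻¹ - Ψ⁻¹)).PosSemidef :=
    hΦ.posSemidef.conjTranspose_mul_mul_same _
  have hexp : (Φ⁻¹ - Ψ⁻¹)ᴴ * Φ * (Φ⁻¹ - Ψ⁻¹)
      = Φ⁻¹ - Ψ⁻¹ - Ψ⁻¹ + Ψ⁻¹ * Φ * Ψ⁻¹ := by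
    rw [hBherm]
    have h1 : Φ⁻¹ * Φ * Φ⁻¹ = Φ⁻¹ := by rw [hΦinv', one_mul]
    have h2 : Φ⁻¹ * Φ * Ψ⁻¹ = Ψ⁻¹ := by rw [hΦinv', one_mul]
    have h3 : Ψ⁻¹ * Φ * Φ⁻¹ = Ψ⁻¹ := by rw [mul_assoc, hΦinv, mul_one]
    calc (Φ⁻¹ - Ψ⁻¹) * Φ * (Φ⁻¹ - Ψ⁻¹)
        = Φ⁻¹ * Φ * Φ⁻¹ - Φ⁻¹ * Φ * Ψ⁻¹ - Ψ⁻¹ * Φ * Φ⁻¹ + Ψ⁻¹ * Φ * Ψ⁻¹ := by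
          noncomm_ring
      _ = Φ⁻¹ - Ψ⁻¹ - Ψ⁻¹ + Ψ⁻¹ * Φ * Ψ⁻¹ := by rw [h1, h2, h3]
  have htrpos := trace_nonneg_of_posSemidef hsq
  rw [hexp, Matrix.trace_add, Matrix.trace_sub, Matrix.trace_sub, htr] at htrpos
  refine ⟨hΨ, ?_⟩
  have hfin : 0 ≤ Φ⁻¹.trace - Ψ⁻¹.trace := by
    calc (0 : ℂ) ≤ Φ⁻¹.trace - Ψ⁻¹.trace - Ψ⁻¹.trace + Ψ⁻¹.trace := htrpos
      _ = Φ⁻¹.trace - Ψ⁻¹.trace := by ring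
  exact sub_nonneg.mp hfin
end

section
/- Let Φ ∈ ℂ^{n×n} be Hermitian positive definite and let P_1,…,P_K ∈ ℂ^{n×n} be Hermitian idempotent matrices that are pairwise orthogonal (P_k P_j = 0 for k ≠ j) and satisfy Σ_{k=1}^K P_k = I_n, and set Ψ = Σ_{k=1}^K P_k Φ P_k. Then tr(Ψ⁻¹) = tr(Φ⁻¹) if and only if Φ = Ψ. -/
open Matrix ComplexOrder

/-- A matrix of the form `Bᴴ * B` with zero trace is zero (so `B = 0`). -/
lemma aux_conjTranspose_mul_self_trace_zero {m : Type*} [Fintype m] [DecidableEq m]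
    {B : Matrix m m ℂ} (h : (Bᴴ * B).trace = 0) : B = 0 := by
  have hdiag : ∀ j, (Bᴴ * B) j j = 0 := by
    have hnn : ∀ j : m, 0 ≤ (Bᴴ * B) j j := by
      intro j
      have : (Bᴴ * B) j j = dotProduct (star fun i => B i j) (fun i => B i j) := by
        simp [Matrix.mul_apply, dotProduct, Matrix.conjTranspose_apply]
      rw [this]
      exact dotProduct_star_self_nonneg _
    intro j
    have := (Finset.sum_eq_zero_iff_of_nonneg (fun i _ => hnn i)).mp h j (Finset.mem_univ j)
    exact this
  ext i j
  have hj : dotProduct (star fun i => B i j) (fun i => B i j) = 0 := by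
    have : (Bᴴ * B) j j = dotProduct (star fun i => B i j) (fun i => B i j) := by
      simp [Matrix.mul_apply, dotProduct, Matrix.conjTranspose_apply]
    rw [← this]; exact hdiag j
  have := dotProduct_star_self_eq_zero.mp hj
  simpa using congr_fun this i

/-- A positive semidefinite matrix with zero trace is zero. -/
lemma aux_psd_trace_zero {m : Type*} [Fintype m] [DecidableEq m]
    {C : Matrix m m ℂ} (hC : C.PosSemidef) (h : C.trace = 0) : C = 0 := by
  obtain ⟨B, rfl⟩ : ∃ B : Matrix m m ℂ, C = Bᴴ * B := by
    open scoped MatrixOrder in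
    exact ⟨CFC.sqrt C, by rw [(CFC.sqrt_nonneg C).posSemidef.isHermitian.eq,
      CFC.sqrt_mul_sqrt_self C hC.nonneg]⟩
  rw [aux_conjTranspose_mul_self_trace_zero h, Matrix.conjTranspose_zero, Matrix.mul_zero]

/-- For a Hermitian positive definite matrix `Φ` pinched by a complete family of pairwise
orthogonal Hermitian projections into `Ψ = Σ_k P_k Φ P_k`, one has
`tr(Ψ⁻¹) = tr(Φ⁻¹)` if and only if `Φ = Ψ`. -/
theorem stmt4 (n K : ℕ) (Φ : Matrix (Fin n) (Fin n) ℂ) (hΦ : Φ.PosDef)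
    (P : Fin K → Matrix (Fin n) (Fin n) ℂ)
    (hherm : ∀ k, (P k)ᴴ = P k)
    (hidem : ∀ k, P k * P k = P k)
    (horth : ∀ k j, k ≠ j → P k * P j = 0)
    (hsum : ∑ k, P k = 1) :
    Matrix.trace (∑ k, P k * Φ * P k)⁻¹ = Matrix.trace Φ⁻¹ ↔ Φ = ∑ k, P k * Φ * P k := by
  set Ψ : Matrix (Fin n) (Fin n) ℂ := ∑ k, P k * Φ * P k with hΨdef
  -- Ψ is positive definite
  have hΨpsd : Ψ.PosSemidef := by
    rw [hΨdef]
    refine Finset.sum_induction _ _ (fun a b ha hb => ha.add hb) Matrix.PosSemidef.zero ?_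
    intro k _
    have := hΦ.posSemidef.conjTranspose_mul_mul_same (P k)
    rwa [hherm k] at this
  have hΨ : Ψ.PosDef := by
    refine Matrix.PosDef.of_dotProduct_mulVec_pos hΨpsd.isHermitian fun x hx => ?_
    have hterm : ∀ k, star x ⬝ᵥ ((P k * Φ * P k) *ᵥ x)
        = star (P k *ᵥ x) ⬝ᵥ (Φ *ᵥ (P k *ᵥ x)) := by
      intro k
      rw [← Matrix.mulVec_mulVec, ← Matrix.mulVec_mulVec, Matrix.dotProduct_mulVec (star x),
        star_mulVec, hherm k]
    have hsum_mv : (∑ k, P k) *ᵥ x = ∑ k, P k *ᵥ x := by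
      ext i
      simp only [Matrix.mulVec, dotProduct, Finset.sum_apply, Matrix.sum_apply,
        Finset.sum_mul]
      rw [Finset.sum_comm]
    have hx' : ∃ k : Fin K, P k *ᵥ x ≠ 0 := by
      by_contra hcon
      push_neg at hcon
      apply hx
      have : (∑ k, P k) *ᵥ x = x := by rw [hsum, Matrix.one_mulVec]
      rw [← this, hsum_mv]
      exact Finset.sum_eq_zero fun k _ => hcon k
    obtain ⟨k₀, hk₀⟩ := hx'
    have hsum_mv₂ : (∑ k, P k * Φ * P k) *ᵥ x = ∑ k, (P k * Φ * P k) *ᵥ x := by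
      ext i
      simp only [Matrix.mulVec, dotProduct, Finset.sum_apply, Matrix.sum_apply,
        Finset.sum_mul]
      rw [Finset.sum_comm]
    have : star x ⬝ᵥ (Ψ *ᵥ x) = ∑ k, star (P k *ᵥ x) ⬝ᵥ (Φ *ᵥ (P k *ᵥ x)) := by
      rw [hΨdef, hsum_mv₂]
      have hdp : star x ⬝ᵥ (∑ k, (P k * Φ * P k) *ᵥ x)
          = ∑ k, star x ⬝ᵥ ((P k * Φ * P k) *ᵥ x) := by
        simp only [dotProduct, Finset.sum_apply, Finset.mul_sum]
        rw [Finset.sum_comm]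
      rw [hdp]
      exact Finset.sum_congr rfl fun k _ => hterm k
    rw [this]
    refine Finset.sum_pos' (fun k _ => hΦ.posSemidef.dotProduct_mulVec_nonneg _) ⟨k₀, Finset.mem_univ _, ?_⟩
    exact hΦ.dotProduct_mulVec_pos hk₀
  have hΨdet : IsUnit Ψ.det := hΨ.det_pos.ne'.isUnit
  have hΦdet : IsUnit Φ.det := hΦ.det_pos.ne'.isUnit
  have hΨinv : Ψ⁻¹ * Ψ = 1 := Matrix.nonsing_inv_mul Ψ hΨdet
  have hΨinv' : Ψ * Ψ⁻¹ = 1 := Matrix.mul_nonsing_inv Ψ hΨdet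
  have hΦinv : Φ⁻¹ * Φ = 1 := Matrix.nonsing_inv_mul Φ hΦdet
  have hΦinv' : Φ * Φ⁻¹ = 1 := Matrix.mul_nonsing_inv Φ hΦdet
  -- Ψ commutes with each projection
  have hPΨ : ∀ k, P k * Ψ = P k * Φ * P k := by
    intro k
    rw [hΨdef, Finset.mul_sum]
    rw [Finset.sum_eq_single k]
    · rw [← Matrix.mul_assoc, ← Matrix.mul_assoc, hidem k]
    · intro j _ hj
      rw [← Matrix.mul_assoc, ← Matrix.mul_assoc, horth k j (Ne.symm hj), Matrix.zero_mul,
        Matrix.zero_mul]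
    · intro h; exact absurd (Finset.mem_univ k) h
  have hΨP : ∀ k, Ψ * P k = P k * Φ * P k := by
    intro k
    rw [hΨdef, Finset.sum_mul]
    rw [Finset.sum_eq_single k]
    · rw [Matrix.mul_assoc, Matrix.mul_assoc, hidem k, Matrix.mul_assoc]
    · intro j _ hj
      rw [Matrix.mul_assoc, Matrix.mul_assoc, horth j k hj, Matrix.mul_zero, Matrix.mul_zero]
    · intro h; exact absurd (Finset.mem_univ k) h
  have hcomm : ∀ k, P k * Ψ = Ψ * P k := fun k => (hPΨ k).trans (hΨP k).symm
  -- Ψ⁻¹ commutes with each projection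
  have hcommInv : ∀ k, P k * Ψ⁻¹ = Ψ⁻¹ * P k := by
    intro k
    calc P k * Ψ⁻¹ = Ψ⁻¹ * (Ψ * (P k * Ψ⁻¹)) := by
          rw [← Matrix.mul_assoc, ← Matrix.mul_assoc, hΨinv, Matrix.one_mul]
      _ = Ψ⁻¹ * ((Ψ * P k) * Ψ⁻¹) := by rw [Matrix.mul_assoc]
      _ = Ψ⁻¹ * ((P k * Ψ) * Ψ⁻¹) := by rw [hcomm k]
      _ = Ψ⁻¹ * (P k * (Ψ * Ψ⁻¹)) := by rw [Matrix.mul_assoc]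
      _ = Ψ⁻¹ * P k := by rw [hΨinv', Matrix.mul_one]
  -- the pinching trace identity: if M commutes with all P k, then tr(MΦ) = tr(MΨ)
  have hpinch : ∀ M : Matrix (Fin n) (Fin n) ℂ, (∀ k, P k * M = M * P k) →
      (M * Φ).trace = (M * Ψ).trace := by
    intro M hM
    have step : ∀ k, (M * (P k * Φ * P k)).trace = (M * (P k * Φ)).trace := by
      intro k
      calc (M * (P k * Φ * P k)).trace = (P k * (M * (P k * Φ))).trace := by
            rw [Matrix.trace_mul_comm (P k) (M * (P k * Φ))]
            congr 1
            simp only [Matrix.mul_assoc]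
        _ = ((P k * M) * (P k * Φ)).trace := by rw [Matrix.mul_assoc]
        _ = ((M * P k) * (P k * Φ)).trace := by rw [hM k]
        _ = (M * (P k * Φ)).trace := by
            rw [Matrix.mul_assoc, ← Matrix.mul_assoc (P k) (P k) Φ, hidem k]
    calc (M * Φ).trace = (M * ((∑ k, P k) * Φ)).trace := by rw [hsum, Matrix.one_mul]
      _ = ∑ k, (M * (P k * Φ)).trace := by
          rw [Finset.sum_mul, Finset.mul_sum, Matrix.trace_sum]
      _ = ∑ k, (M * (P k * Φ * P k)).trace := by
          exact Finset.sum_congr rfl fun k _ => (step k).symm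
      _ = (M * Ψ).trace := by rw [hΨdef, Finset.mul_sum, Matrix.trace_sum]
  constructor
  · intro htr
    -- the key matrix C = (Ψ⁻¹ - Φ⁻¹) Φ (Ψ⁻¹ - Φ⁻¹) is PSD with trace 0, hence zero
    set X : Matrix (Fin n) (Fin n) ℂ := Ψ⁻¹ - Φ⁻¹ with hXdef
    have hXherm : Xᴴ = X := by
      rw [hXdef, Matrix.conjTranspose_sub, hΨpsd.inv.isHermitian.eq,
        hΦ.posSemidef.inv.isHermitian.eq]
    have hCpsd : (X * Φ * X).PosSemidef := by
      have := hΦ.posSemidef.conjTranspose_mul_mul_same X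
      rwa [hXherm] at this
    -- compute the trace of C
    have hcommInv2 : ∀ k, P k * (Ψ⁻¹ * Ψ⁻¹) = (Ψ⁻¹ * Ψ⁻¹) * P k := by
      intro k
      rw [← Matrix.mul_assoc, hcommInv k, Matrix.mul_assoc, hcommInv k, Matrix.mul_assoc]
    have hCexp : X * Φ * X = Ψ⁻¹ * Φ * Ψ⁻¹ - Ψ⁻¹ - Ψ⁻¹ + Φ⁻¹ := by
      simp only [hXdef, Matrix.sub_mul, Matrix.mul_sub, hΦinv, Matrix.one_mul]
      rw [Matrix.mul_assoc Ψ⁻¹ Φ Φ⁻¹, hΦinv', Matrix.mul_one]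
      abel
    have htcyc : (Ψ⁻¹ * Φ * Ψ⁻¹).trace = Ψ⁻¹.trace := by
      calc (Ψ⁻¹ * Φ * Ψ⁻¹).trace = ((Ψ⁻¹ * Ψ⁻¹) * Φ).trace := by
            rw [Matrix.trace_mul_comm (Ψ⁻¹ * Φ) Ψ⁻¹, Matrix.mul_assoc, ← Matrix.mul_assoc]
        _ = ((Ψ⁻¹ * Ψ⁻¹) * Ψ).trace := hpinch _ hcommInv2
        _ = Ψ⁻¹.trace := by rw [Matrix.mul_assoc, hΨinv, Matrix.mul_one]
    have htC : (X * Φ * X).trace = 0 := by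
      rw [hCexp, Matrix.trace_add, Matrix.trace_sub, Matrix.trace_sub, htcyc, htr]
      ring
    have hC0 : X * Φ * X = 0 := aux_psd_trace_zero hCpsd htC
    -- deduce X = 0 using the positive square root of Φ
    open scoped MatrixOrder in
    set S : Matrix (Fin n) (Fin n) ℂ := CFC.sqrt Φ with hSdef
    open scoped MatrixOrder in
    have hSS : S * S = Φ := CFC.sqrt_mul_sqrt_self Φ hΦ.posSemidef.nonneg
    open scoped MatrixOrder in
    have hSherm : Sᴴ = S := (CFC.sqrt_nonneg Φ).posSemidef.isHermitian.eq
    have hSX : S * X = 0 := by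
      have : (S * X)ᴴ * (S * X) = 0 := by
        rw [Matrix.conjTranspose_mul, hSherm, hXherm, Matrix.mul_assoc,
          ← Matrix.mul_assoc S S X, hSS, ← Matrix.mul_assoc]
        exact hC0
      exact Matrix.conjTranspose_mul_self_eq_zero.mp this
    have hSdet : IsUnit S.det := by
      have hdet : S.det * S.det = Φ.det := by rw [← Matrix.det_mul, hSS]
      exact isUnit_of_mul_isUnit_left (hdet ▸ hΦdet)
    have hX0 : X = 0 := by
      calc X = (S⁻¹ * S) * X := by rw [Matrix.nonsing_inv_mul S hSdet, Matrix.one_mul]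
        _ = S⁻¹ * (S * X) := by rw [Matrix.mul_assoc]
        _ = 0 := by rw [hSX, Matrix.mul_zero]
    have hinv_eq : Ψ⁻¹ = Φ⁻¹ := sub_eq_zero.mp hX0
    calc Φ = Φ⁻¹⁻¹ := (Matrix.nonsing_inv_nonsing_inv Φ hΦdet).symm
      _ = Ψ⁻¹⁻¹ := by rw [hinv_eq]
      _ = Ψ := Matrix.nonsing_inv_nonsing_inv Ψ hΨdet
  · intro h
    rw [← h]
end

section
/- Let Φ ∈ ℂ^{n×n} be Hermitian positive definite and let P_1,…,P_K ∈ ℂ^{n×n} be Hermitian idempotent matrices satisfying Σ_{k=1}^K P_k = I_n. Then the 2n×2n block matrix [[Σ_k P_k Φ P_k, I_n],[I_n, Σ_k P_k Φ⁻¹ P_k]] is positive semidefinite. -/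
open Matrix ComplexOrder

lemma fromBlocks_sum' {K n : ℕ} (A B C D : Fin K → Matrix (Fin n) (Fin n) ℂ) :
    ∑ k, Matrix.fromBlocks (A k) (B k) (C k) (D k) =
      Matrix.fromBlocks (∑ k, A k) (∑ k, B k) (∑ k, C k) (∑ k, D k) := by
  ext i j
  cases i <;> cases j <;> simp [Matrix.fromBlocks, Matrix.sum_apply]

/-- For a Hermitian positive definite matrix `Φ` and Hermitian idempotents `P_k` summing to
the identity, the block matrix `[[Σ_k P_k Φ P_k, I],[I, Σ_k P_k Φ⁻¹ P_k]]` is positive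
semidefinite. -/
theorem stmt6 (n K : ℕ) (Φ : Matrix (Fin n) (Fin n) ℂ) (hΦ : Φ.PosDef)
    (P : Fin K → Matrix (Fin n) (Fin n) ℂ)
    (hherm : ∀ k, (P k)ᴴ = P k)
    (hidem : ∀ k, P k * P k = P k)
    (hsum : ∑ k, P k = 1) :
    (Matrix.fromBlocks (∑ k, P k * Φ * P k) (1 : Matrix (Fin n) (Fin n) ℂ)
      (1 : Matrix (Fin n) (Fin n) ℂ) (∑ k, P k * Φ⁻¹ * P k)).PosSemidef := by
  haveI := hΦ.isUnit.invertible
  have hbig : (Matrix.fromBlocks Φ (1 : Matrix (Fin n) (Fin n) ℂ)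
      (1 : Matrix (Fin n) (Fin n) ℂ) Φ⁻¹).PosSemidef := by
    have := (Matrix.PosDef.fromBlocks₁₁ (A := Φ)
      (1 : Matrix (Fin n) (Fin n) ℂ) Φ⁻¹ hΦ).mpr (by simpa using Matrix.PosSemidef.zero)
    simpa using this
  have key : ∀ k, (Matrix.fromBlocks (P k * Φ * P k) (P k) (P k)
      (P k * Φ⁻¹ * P k)).PosSemidef := by
    intro k
    have h := hbig.conjTranspose_mul_mul_same
      (Matrix.fromBlocks (P k) 0 0 (P k))
    convert h using 1
    simp [Matrix.fromBlocks_conjTranspose, Matrix.fromBlocks_multiply, hherm,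
      Matrix.mul_assoc, hidem]
  have hs : (∑ k, Matrix.fromBlocks (P k * Φ * P k) (P k) (P k)
      (P k * Φ⁻¹ * P k)).PosSemidef :=
    Finset.sum_induction _ _ (fun _ _ => Matrix.PosSemidef.add)
      Matrix.PosSemidef.zero (fun k _ => key k)
  rw [fromBlocks_sum', hsum] at hs
  exact hs
end
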